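/- Let A ∈ ℝ^{n×n} be symmetric positive semidefinite, 1 ≤ t ≤ r ≤ n, and J_t = {j_1,…,j_t} ⊆ {1,…,n} with A(J_t,J_t) invertible. Assume E_{r−t}(A − A_{J_t}) > 0. Then the ratio N/D equals (r−t+1) · E_{r−t+1}(A − A_{J_t}) / E_{r−t}(A − A_{J_t}), where D is the sum over all ordered tuples (j_{t+1},…,j_r) of pairwise distinct indices in {1,…,n} ∖ J_t of det(A(J,J)) with J = J_t ∪ {j_{t+1},…,j_r}, and N is the corresponding sum of det(A(J,J)) · ‖A − A_J‖_* restricted to tuples for which A(J,J) is invertible. -/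

import Mathlib

open Matrix Finset

/-- Cross approximation `A_J = A(:,J) A(J,J)⁻¹ A(J,:)` built on the principal submatrix
indexed by the finite index set `J`. -/
noncomputable def crossApprox {n : ℕ} (A : Matrix (Fin n) (Fin n) ℝ) (J : Finset (Fin n)) :
    Matrix (Fin n) (Fin n) ℝ :=
  A.submatrix id (Subtype.val : J → Fin n) *
    (A.submatrix (Subtype.val : J → Fin n) (Subtype.val : J → Fin n))⁻¹ *
    A.submatrix (Subtype.val : J → Fin n) id

/-- Determinant of the principal submatrix `A(J,J)`. -/
noncomputable def pminor {n : ℕ} (A : Matrix (Fin n) (Fin n) ℝ) (J : Finset (Fin n)) : ℝ :=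
  (A.submatrix (Subtype.val : J → Fin n) (Subtype.val : J → Fin n)).det

/-- Nuclear norm: sum of the singular values of `M`, i.e. of the square roots of the
eigenvalues of `Mᴴ M`. -/
noncomputable def nuclearNorm {n : ℕ} (M : Matrix (Fin n) (Fin n) ℝ) : ℝ :=
  ∑ i, Real.sqrt ((show (Mᵀ * M).IsHermitian from Matrix.isHermitian_conjTranspose_mul_self M).eigenvalues i)

/-- Frobenius norm. -/
noncomputable def frobNorm {n : ℕ} (M : Matrix (Fin n) (Fin n) ℝ) : ℝ :=
  Real.sqrt (∑ i, ∑ j, (M i j) ^ 2)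

/-- Spectral norm: the largest singular value. -/
noncomputable def specNorm {n : ℕ} (M : Matrix (Fin n) (Fin n) ℝ) : ℝ :=
  ⨆ i, Real.sqrt ((show (Mᵀ * M).IsHermitian from Matrix.isHermitian_conjTranspose_mul_self M).eigenvalues i)

/-- Max norm: largest magnitude of an entry. -/
noncomputable def maxNorm {n : ℕ} (M : Matrix (Fin n) (Fin n) ℝ) : ℝ :=
  ⨆ i, ⨆ j, |M i j|

/-- The tuple `f` sorted in nonincreasing order. -/
noncomputable def sortedDesc {m : ℕ} (f : Fin m → ℝ) : Fin m → ℝ :=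
  fun i => -(((fun j => -f j) ∘ Tuple.sort fun j => -f j) i)

/-- `Esum M k` is the sum of all `k × k` principal minors of `M`. -/
noncomputable def Esum {n : ℕ} (M : Matrix (Fin n) (Fin n) ℝ) (k : ℕ) : ℝ :=
  ∑ K ∈ Finset.powersetCard k (Finset.univ : Finset (Fin n)), pminor M K

/-!
Write `B = A - A_{J_t}`. Block elimination gives `det A(J_t ∪ K) = det A(J_t) · det B(K)` for `K`
disjoint from `J_t`, and `B` vanishes on the rows indexed by `J_t`; grouping the ordered tuples by
their underlying set, the denominator is `(r-t)! · det A(J_t) · E_{r-t}(B)`.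

For `J = J_t ∪ K` with `det A(J,J) ≠ 0` the residual `A - A_J` is positive semidefinite, so its
nuclear norm is its trace, and block elimination again gives
`det A(J,J) · (A - A_J)_{ii} = det A(J ∪ {i}, J ∪ {i}) = det A(J_t) · det B(K ∪ {i})` for `i ∉ J`.
If instead `det B(K) = 0`, every `det B(K ∪ {i})` vanishes too, since a singular principal submatrix
of a positive semidefinite matrix makes every larger one singular. Summing over `K`, each
`(r-t+1)`-subset `K ∪ {i}` is counted `r-t+1` times, which gives the numerator
`(r-t)! · det A(J_t) · (r-t+1) · E_{r-t+1}(B)`.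
-/

open scoped Nat

section CrossApprox

variable {n : ℕ} {A : Matrix (Fin n) (Fin n) ℝ} {J : Finset (Fin n)}

theorem crossApprox_submatrix {κ μ : Type*} (r : κ → Fin n) (c : μ → Fin n) :
    (crossApprox A J).submatrix r c =
      A.submatrix r (Subtype.val : J → Fin n) *
        (A.submatrix (Subtype.val : J → Fin n) (Subtype.val : J → Fin n))⁻¹ *
        A.submatrix (Subtype.val : J → Fin n) c := by
  rw [crossApprox, submatrix_mul _ _ _ id _ Function.bijective_id,
    submatrix_mul _ _ _ id _ Function.bijective_id]
  rfl

theorem sub_crossApprox_apply_of_mem (hJ : pminor A J ≠ 0) {i : Fin n} (hi : i ∈ J) (j : Fin n) :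
    (A - crossApprox A J) i j = 0 := by
  have hrows : (A - crossApprox A J).submatrix (Subtype.val : J → Fin n) id = 0 := by
    rw [submatrix_sub, Pi.sub_apply, Pi.sub_apply, crossApprox_submatrix,
      mul_nonsing_inv _ (isUnit_iff_ne_zero.mpr hJ), Matrix.one_mul, sub_self]
  exact congrFun₂ hrows ⟨i, hi⟩ j

/-- `A - A_J` is the Schur complement of `A(J,J)` in the bordered matrix
`[[A(J,J), A(J,:)], [A(:,J), A]]`, a principal submatrix of `A` with repeated indices. -/
theorem Matrix.PosSemidef.sub_crossApprox (hA : A.PosSemidef) (hJ : pminor A J ≠ 0) :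
    (A - crossApprox A J).PosSemidef := by
  let e : J ⊕ Fin n → Fin n := Sum.elim Subtype.val id
  set P := A.submatrix (Subtype.val : J → Fin n) (Subtype.val : J → Fin n)
  have hP : P.PosDef := (hA.submatrix _).posDef_iff_det_ne_zero.mpr hJ
  have : Invertible P := invertibleOfIsUnitDet P (isUnit_iff_ne_zero.mpr hJ)
  have hblocks : A.submatrix e e =
      fromBlocks P (A.submatrix Subtype.val id) (A.submatrix Subtype.val id)ᴴ A := by
    rw [conjTranspose_submatrix, hA.1.eq]
    ext (i | i) (j | j) <;> rfl
  have hschur := (PosDef.fromBlocks₁₁ _ A hP).mp (hblocks ▸ hA.submatrix e)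
  rwa [conjTranspose_submatrix, hA.1.eq, ← crossApprox_submatrix] at hschur

theorem pminor_union (hJ : pminor A J ≠ 0) {K : Finset (Fin n)} (hd : Disjoint J K) :
    pminor A (J ∪ K) = pminor A J * pminor (A - crossApprox A J) K := by
  let e := Equiv.Finset.union J K hd
  set P := A.submatrix (Subtype.val : J → Fin n) (Subtype.val : J → Fin n)
  have : Invertible P := invertibleOfIsUnitDet P (isUnit_iff_ne_zero.mpr hJ)
  have hblocks :
      (A.submatrix (Subtype.val : (J ∪ K : Finset (Fin n)) → Fin n) Subtype.val).submatrix e e =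
      fromBlocks P (A.submatrix Subtype.val Subtype.val) (A.submatrix Subtype.val Subtype.val)
        (A.submatrix (Subtype.val : K → Fin n) Subtype.val) := by
    ext (i | i) (j | j) <;> rfl
  rw [pminor, ← det_submatrix_equiv_self e, hblocks, det_fromBlocks₁₁, invOf_eq_nonsing_inv,
    pminor, pminor, submatrix_sub, Pi.sub_apply, Pi.sub_apply, crossApprox_submatrix]

theorem pminor_singleton (M : Matrix (Fin n) (Fin n) ℝ) (i : Fin n) : pminor M {i} = M i i :=
  det_unique _

theorem pminor_insert (hJ : pminor A J ≠ 0) {i : Fin n} (hi : i ∉ J) :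
    pminor A (insert i J) = pminor A J * (A - crossApprox A J) i i := by
  rw [insert_eq, union_comm, pminor_union hJ (disjoint_singleton_right.mpr hi), pminor_singleton]

end CrossApprox

open scoped ComplexOrder in
theorem Matrix.PosSemidef.det_eq_zero_of_det_submatrix_eq_zero {𝕜 ι κ : Type*} [RCLike 𝕜]
    [Fintype ι] [DecidableEq ι] [Fintype κ] [DecidableEq κ] {M : Matrix ι ι 𝕜} (hM : M.PosSemidef)
    {e : κ → ι} (he : Function.Injective e) (h : (M.submatrix e e).det = 0) : M.det = 0 := by
  by_contra hne
  exact ((hM.posDef_iff_det_ne_zero.mpr hne).submatrix he).det_pos.ne' h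

theorem pminor_eq_zero_of_subset {n : ℕ} {B : Matrix (Fin n) (Fin n) ℝ} (hB : B.PosSemidef)
    {K L : Finset (Fin n)} (hKL : K ⊆ L) (hK : pminor B K = 0) : pminor B L = 0 :=
  (hB.submatrix _).det_eq_zero_of_det_submatrix_eq_zero (e := fun x : K => ⟨x, hKL x.2⟩)
    (fun _ _ h => Subtype.ext (Subtype.mk.inj h)) hK

theorem nuclearNorm_eq_trace {n : ℕ} {M : Matrix (Fin n) (Fin n) ℝ} (hM : M.PosSemidef) :
    nuclearNorm M = M.trace := by
  have hP : (Mᴴ * M).PosSemidef := posSemidef_conjTranspose_mul_self M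
  have hsa : IsSelfAdjoint M := hM.1
  have hsqrt : hP.1.cfc Real.sqrt = M := by
    rw [← hP.1.cfc_eq, hM.1.eq, ← pow_two, ← cfc_pow_id (R := ℝ) M 2 hsa,
      ← cfc_comp' (R := ℝ) Real.sqrt (· ^ 2) M]
    conv_rhs => rw [← cfc_id' ℝ M hsa]
    refine cfc_congr fun x hx => ?_
    rw [hM.1.spectrum_real_eq_range_eigenvalues] at hx
    obtain ⟨i, rfl⟩ := hx
    simp [Real.sqrt_sq (hM.eigenvalues_nonneg i)]
  conv_rhs => rw [← hsqrt]
  rw [IsHermitian.cfc, Unitary.conjStarAlgAut_apply, trace_mul_cycle,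
    Unitary.coe_star_mul_self, Matrix.one_mul, trace_diagonal]
  rfl

section Counting

variable {α M : Type*} [DecidableEq α] [AddCommMonoid M]

theorem Finset.sum_powersetCard_sum_sdiff_insert (S : Finset α) (k : ℕ) (g : Finset α → M) :
    ∑ K ∈ S.powersetCard k, ∑ i ∈ S \ K, g (insert i K) =
      (k + 1) • ∑ L ∈ S.powersetCard (k + 1), g L := by
  have hcard : ∀ L ∈ S.powersetCard (k + 1), (k + 1) • g L = ∑ _i ∈ L, g L := by
    intro L hL
    rw [sum_const, (mem_powersetCard.mp hL).2]
  rw [smul_sum, sum_congr rfl hcard, sum_sigma', sum_sigma']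
  refine sum_nbij' (fun p => ⟨insert p.2 p.1, p.2⟩) (fun p => ⟨p.1.erase p.2, p.2⟩)
    ?_ ?_ ?_ ?_ fun _ _ => rfl
  · rintro ⟨K, i⟩ hp
    simp only [mem_sigma, mem_powersetCard, mem_sdiff] at hp ⊢
    obtain ⟨⟨hKS, hcard⟩, hiS, hiK⟩ := hp
    exact ⟨⟨insert_subset hiS hKS, by rw [card_insert_of_notMem hiK, hcard]⟩, mem_insert_self _ _⟩
  · rintro ⟨L, i⟩ hp
    simp only [mem_sigma, mem_powersetCard, mem_sdiff] at hp ⊢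
    obtain ⟨⟨hLS, hcard⟩, hi⟩ := hp
    exact ⟨⟨(erase_subset _ _).trans hLS, by rw [card_erase_of_mem hi, hcard]; rfl⟩,
      hLS hi, notMem_erase _ _⟩
  · rintro ⟨K, i⟩ hp
    simp only [mem_sigma, mem_sdiff] at hp
    simp [erase_insert hp.2.2]
  · rintro ⟨L, i⟩ hp
    simp only [mem_sigma] at hp
    simp [insert_erase hp.2]

theorem Finset.card_filter_embedding_map_eq [Fintype α] {K : Finset α} {k : ℕ} (hK : K.card = k) :
    (univ.filter fun f : Fin k ↪ α => univ.map f = K).card = k ! := by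
  have e : Fin k ≃ K := Fintype.equivOfCardEq (by simp [hK])
  suffices h : (univ : Finset (Fin k ≃ K)).card =
      (univ.filter fun f : Fin k ↪ α => univ.map f = K).card by
    rw [← h, card_univ, Fintype.card_equiv e, Fintype.card_fin]
  refine card_bij (fun e _ => e.toEmbedding.trans (Function.Embedding.subtype _)) ?_ ?_ ?_
  · intro e _
    simp only [mem_filter, mem_univ, true_and]
    ext x
    simp only [mem_map, mem_univ, true_and, Function.Embedding.trans_apply,
      Function.Embedding.coe_subtype, Equiv.coe_toEmbedding]
    exact ⟨fun ⟨i, hi⟩ => hi ▸ (e i).2, fun hx => ⟨e.symm ⟨x, hx⟩, by simp⟩⟩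
  · intro e₁ _ e₂ _ h
    exact Equiv.ext fun i => Subtype.ext (DFunLike.congr_fun h i)
  · intro f hf
    have hmem : ∀ i, f i ∈ K := fun i => (mem_filter.mp hf).2 ▸ mem_map_of_mem f (mem_univ i)
    have hbij : Function.Bijective fun i => (⟨f i, hmem i⟩ : K) := by
      rw [Fintype.bijective_iff_injective_and_card]
      exact ⟨fun a b hab => f.injective (congrArg Subtype.val hab), by simp [hK]⟩
    exact ⟨Equiv.ofBijective _ hbij, mem_univ _, rfl⟩

theorem Finset.sum_embedding_filter_notMem (T : Finset α) [Fintype α] (k : ℕ) (g : Finset α → M) :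
    ∑ f ∈ univ.filter (fun f : Fin k ↪ α => ∀ i, f i ∉ T), g (univ.map f) =
      k ! • ∑ K ∈ Tᶜ.powersetCard k, g K := by
  have hmaps : ∀ f ∈ univ.filter (fun f : Fin k ↪ α => ∀ i, f i ∉ T),
      univ.map f ∈ Tᶜ.powersetCard k := by
    intro f hf
    refine mem_powersetCard.mpr ⟨fun x hx => ?_, by simp⟩
    obtain ⟨i, -, rfl⟩ := mem_map.mp hx
    exact mem_compl.mpr ((mem_filter.mp hf).2 i)
  rw [← sum_fiberwise_of_maps_to hmaps, smul_sum]
  refine sum_congr rfl fun K hK => ?_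
  obtain ⟨hKT, hKcard⟩ := mem_powersetCard.mp hK
  have hfiber : (univ.filter fun f : Fin k ↪ α => ∀ i, f i ∉ T).filter (fun f => univ.map f = K) =
      univ.filter fun f : Fin k ↪ α => univ.map f = K := by
    ext f
    simp only [filter_filter, mem_filter, mem_univ, true_and, and_iff_right_iff_imp]
    rintro rfl i
    exact mem_compl.mp (hKT (mem_map_of_mem f (mem_univ i)))
  rw [hfiber, sum_congr rfl fun f hf => congrArg g (mem_filter.mp hf).2, sum_const,
    card_filter_embedding_map_eq hKcard]

end Counting

theorem Esum_eq_sum_powersetCard_compl {n : ℕ} {B : Matrix (Fin n) (Fin n) ℝ}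
    {T : Finset (Fin n)} (hT : ∀ i ∈ T, ∀ j, B i j = 0) (m : ℕ) :
    Esum B m = ∑ K ∈ Tᶜ.powersetCard m, pminor B K := by
  refine (sum_subset (powersetCard_mono (subset_univ _)) fun K hK hKT => ?_).symm
  obtain ⟨i, hiK, hiT⟩ :=
    not_subset.mp fun h => hKT (mem_powersetCard.mpr ⟨h, (mem_powersetCard.mp hK).2⟩)
  exact det_eq_zero_of_row_eq_zero ⟨i, hiK⟩ fun j => hT i (by simpa using hiT) j

theorem pminor_union_mul_nuclearNorm {n : ℕ} {A : Matrix (Fin n) (Fin n) ℝ} (hA : A.PosSemidef)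
    {J K : Finset (Fin n)} (hJ : pminor A J ≠ 0) (hK : Disjoint J K) :
    pminor A (J ∪ K) * nuclearNorm (A - crossApprox A (J ∪ K)) =
      pminor A J * ∑ i ∈ Jᶜ \ K, pminor (A - crossApprox A J) (insert i K) := by
  have hJK := pminor_union hJ hK
  by_cases hBK : pminor (A - crossApprox A J) K = 0
  · rw [hJK, hBK, mul_zero, zero_mul, sum_eq_zero fun i _ =>
      pminor_eq_zero_of_subset (hA.sub_crossApprox hJ) (subset_insert i K) hBK, mul_zero]
  replace hJK : pminor A (J ∪ K) ≠ 0 := hJK ▸ mul_ne_zero hJ hBK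
  rw [nuclearNorm_eq_trace (hA.sub_crossApprox hJK), trace, mul_sum, mul_sum]
  refine (sum_subset (subset_univ _) fun i _ hi => ?_).symm.trans (sum_congr rfl fun i hi => ?_)
  · have hi' : i ∈ J ∪ K := by simpa [or_iff_not_imp_left] using hi
    rw [diag_apply, sub_crossApprox_apply_of_mem hJK hi', mul_zero]
  · obtain ⟨hiJ, hiK⟩ : i ∉ J ∧ i ∉ K := by simpa using hi
    rw [diag_apply, ← pminor_insert hJK (by simp [hiJ, hiK]), ← union_insert,
      pminor_union hJ (disjoint_insert_right.mpr ⟨hiJ, hK⟩)]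

open scoped Classical in
theorem conditional_expectation_nuclear_error_general {n r t : ℕ}
    (A : Matrix (Fin n) (Fin n) ℝ) (hA : A.PosSemidef)
    (Jt : Finset (Fin n)) (hJtinv : pminor A Jt ≠ 0) :
    (∑ f ∈ Finset.univ.filter (fun f : Fin (r - t) ↪ Fin n =>
          (∀ i, f i ∉ Jt) ∧ pminor A (Jt ∪ Finset.univ.map f) ≠ 0),
        pminor A (Jt ∪ Finset.univ.map f) *
          nuclearNorm (A - crossApprox A (Jt ∪ Finset.univ.map f))) /
      (∑ f ∈ Finset.univ.filter (fun f : Fin (r - t) ↪ Fin n => ∀ i, f i ∉ Jt),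
        pminor A (Jt ∪ Finset.univ.map f)) =
      ((r - t + 1 : ℕ) : ℝ) * Esum (A - crossApprox A Jt) (r - t + 1) /
        Esum (A - crossApprox A Jt) (r - t) := by
  have hdisj : ∀ K ∈ Jtᶜ.powersetCard (r - t), Disjoint Jt K := fun K hK =>
    subset_compl_iff_disjoint_left.mp (mem_powersetCard.mp hK).1
  have hrows : ∀ i ∈ Jt, ∀ j, (A - crossApprox A Jt) i j = 0 :=
    fun i hi => sub_crossApprox_apply_of_mem hJtinv hi
  rw [← filter_filter, sum_filter_of_ne fun f _ h => left_ne_zero_of_mul h,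
    sum_embedding_filter_notMem Jt (r - t)
      (fun K => pminor A (Jt ∪ K) * nuclearNorm (A - crossApprox A (Jt ∪ K))),
    sum_embedding_filter_notMem Jt (r - t) (fun K => pminor A (Jt ∪ K)),
    sum_congr rfl fun K hK => pminor_union_mul_nuclearNorm hA hJtinv (hdisj K hK),
    sum_congr rfl fun K hK => pminor_union hJtinv (hdisj K hK), ← mul_sum, ← mul_sum,
    sum_powersetCard_sum_sdiff_insert, ← Esum_eq_sum_powersetCard_compl hrows,
    ← Esum_eq_sum_powersetCard_compl hrows]
  simp only [nsmul_eq_mul]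
  rw [mul_div_mul_left _ _ (Nat.cast_ne_zero.mpr (Nat.factorial_ne_zero _)),
    mul_div_mul_left _ _ hJtinv]

open scoped Classical in
/-- conditional-expectation identity. With `D` the sum, over ordered tuples of
`r - t` pairwise distinct indices outside `J_t`, of `det A(J,J)` (`J = J_t ∪ {tuple}`), and
`N` the corresponding sum of `det A(J,J) · ‖A - A_J‖_*` over tuples with `A(J,J)` invertible,
one has `N / D = (r-t+1) · E_{r-t+1}(A - A_{J_t}) / E_{r-t}(A - A_{J_t})`. -/
theorem conditional_expectation_nuclear_error {n r t : ℕ}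
    (A : Matrix (Fin n) (Fin n) ℝ) (hA : A.PosSemidef)
    (ht : 1 ≤ t) (htr : t ≤ r) (hrn : r ≤ n)
    (Jt : Finset (Fin n)) (hJtcard : Jt.card = t) (hJtinv : pminor A Jt ≠ 0)
    (hE : 0 < Esum (A - crossApprox A Jt) (r - t)) :
    (∑ f ∈ Finset.univ.filter (fun f : Fin (r - t) ↪ Fin n =>
          (∀ i, f i ∉ Jt) ∧ pminor A (Jt ∪ Finset.univ.map f) ≠ 0),
        pminor A (Jt ∪ Finset.univ.map f) *
          nuclearNorm (A - crossApprox A (Jt ∪ Finset.univ.map f))) /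
      (∑ f ∈ Finset.univ.filter (fun f : Fin (r - t) ↪ Fin n => ∀ i, f i ∉ Jt),
        pminor A (Jt ∪ Finset.univ.map f)) =
      ((r - t + 1 : ℕ) : ℝ) * Esum (A - crossApprox A Jt) (r - t + 1) /
        Esum (A - crossApprox A Jt) (r - t) :=
  conditional_expectation_nuclear_error_general A hA Jt hJtinv
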